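/- arXiv:1904.09109 — 2 statements merged into one kernel-verified Lean document; each statement's English description precedes it below -/
import Mathlib

section
/- Let a ∈ ℝ^d with ‖a‖₂ = 1, let δ > 0, let b_1 < ⋯ < b_{k+1} be reals, let v_1, …, v_k ∈ ℝ^m, and let W ∈ ℝ^{k×m} have first row v_1ᵀ and i-th row (v_i - v_{i-1})ᵀ for 2 ≤ i ≤ k. For c > 0 define g_c : ℝ^d → ℝ^m by (g_c)_j(x) = Σ_{l=1}^{k} W_{l,j} · ρ(c(aᵀx - b_l)). Then for every x ∈ ℝ^d with b_i + δ < aᵀx < b_{i+1} - δ for some i ∈ {1,…,k}, the output g_c(x) converges to v_i as c → ∞. -/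
open RealInnerProductSpace

/-- The sigmoid function `ρ(t) = 1 / (1 + e^{-t})`. -/
noncomputable def sigmoid (t : ℝ) : ℝ := 1 / (1 + Real.exp (-t))

/-!
As `c → ∞`, the unit `ρ(c(aᵀx - b_l))` tends to `1` when `b_l < aᵀx`, i.e. for `l ≤ i`, and to `0`
when `aᵀx < b_l`, i.e. for `l > i`. Hence `g_c(x)` tends to `∑_{l ≤ i} W_l`, which telescopes
to `v_i` by the choice of the rows of `W`.
-/

open Filter Topology Finset

theorem tendsto_sigmoid_atTop : Tendsto sigmoid atTop (𝓝 1) := by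
  have h := (tendsto_const_nhds (x := (1 : ℝ))).add Real.tendsto_exp_neg_atTop_nhds_zero
  unfold sigmoid
  simpa only [one_div, add_zero, inv_one] using h.inv₀ (by norm_num)

theorem tendsto_sigmoid_atBot : Tendsto sigmoid atBot (𝓝 0) := by
  have h : Tendsto (fun t : ℝ => 1 + Real.exp (-t)) atBot atTop :=
    tendsto_atTop_add_const_left _ 1 (Real.tendsto_exp_atTop.comp tendsto_neg_atBot_atTop)
  unfold sigmoid
  simp only [one_div]
  exact h.inv_tendsto_atTop

theorem tendsto_sigmoid_mul_atTop_of_pos {s : ℝ} (hs : 0 < s) :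
    Tendsto (fun c : ℝ => sigmoid (c * s)) atTop (𝓝 1) :=
  tendsto_sigmoid_atTop.comp (tendsto_id.atTop_mul_const hs)

theorem tendsto_sigmoid_mul_atTop_of_neg {s : ℝ} (hs : s < 0) :
    Tendsto (fun c : ℝ => sigmoid (c * s)) atTop (𝓝 0) :=
  tendsto_sigmoid_atBot.comp (tendsto_id.atTop_mul_const_of_neg hs)

theorem Fin.sum_Iic_eq_of_eq_sub {M : Type*} [AddCommGroup M] {k : ℕ} (hk : 0 < k)
    (v W : Fin k → M) (hW0 : W ⟨0, hk⟩ = v ⟨0, hk⟩)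
    (hWs : ∀ i j : Fin k, (j : ℕ) = (i : ℕ) + 1 → W j = v j - v i) (i : Fin k) :
    ∑ l ∈ Iic i, W l = v i := by
  obtain ⟨k, rfl⟩ : ∃ k', k = k' + 1 := ⟨k - 1, (Nat.succ_pred_eq_of_pos hk).symm⟩
  induction i using Fin.induction with
  | zero => rwa [show Iic (0 : Fin (k + 1)) = {0} from Iic_bot, sum_singleton]
  | succ j ih =>
    have hIic : Iic j.succ = insert j.succ (Iic j.castSucc) := by
      ext l
      simp only [mem_Iic, mem_insert, Fin.le_def, Fin.ext_iff, Fin.val_succ, Fin.val_castSucc]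
      omega
    rw [hIic, sum_insert (by simp), ih, hWs j.castSucc j.succ (by simp)]
    abel

theorem network_output_tendsto_general {d k m : ℕ} (hk : 0 < k)
    (a : EuclideanSpace ℝ (Fin d))
    (δ : ℝ) (hδ : 0 < δ)
    (b : Fin (k + 1) → ℝ) (hb : StrictMono b)
    (v : Fin k → Fin m → ℝ)
    (W : Matrix (Fin k) (Fin m) ℝ)
    (hW0 : W ⟨0, hk⟩ = v ⟨0, hk⟩)
    (hWs : ∀ i j : Fin k, (j : ℕ) = (i : ℕ) + 1 → W j = v j - v i)
    (x : EuclideanSpace ℝ (Fin d)) (i : Fin k)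
    (hx₁ : b i.castSucc + δ < ⟪a, x⟫)
    (hx₂ : ⟪a, x⟫ < b i.succ - δ) :
    Filter.Tendsto
      (fun c : ℝ => fun j : Fin m =>
        ∑ l : Fin k, W l j * sigmoid (c * (⟪a, x⟫ - b l.castSucc)))
      Filter.atTop (nhds (v i)) := by
  have hsigmoid (l : Fin k) : Tendsto (fun c => sigmoid (c * (⟪a, x⟫ - b l.castSucc))) atTop
      (𝓝 (if l ≤ i then 1 else 0)) := by
    split_ifs with hl
    · have : b l.castSucc ≤ b i.castSucc := hb.monotone (Fin.castSucc_le_castSucc_iff.mpr hl)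
      exact tendsto_sigmoid_mul_atTop_of_pos (by linarith)
    · have : b i.succ ≤ b l.castSucc := hb.monotone (Fin.succ_le_castSucc_iff.mpr (not_le.mp hl))
      exact tendsto_sigmoid_mul_atTop_of_neg (by linarith)
  have hlimit (j : Fin m) : ∑ l, W l j * (if l ≤ i then 1 else 0) = v i j := by
    rw [← Fin.sum_Iic_eq_of_eq_sub hk v W hW0 hWs i,
      Finset.sum_apply (g := fun l => (W l : Fin m → ℝ))]
    simp only [mul_ite, mul_one, mul_zero, ← sum_filter, filter_ge_eq_Iic]
  refine tendsto_pi_nhds.mpr fun j => ?_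
  rw [← hlimit j]
  exact tendsto_finsetSum _ fun l _ => (hsigmoid l).const_mul (W l j)

/-- For the 2-layer sigmoid network with difference-weight matrix `W`, if `x` projects
into the `i`-th interval with `δ`-margin, then the network output `g_c(x)` converges
to the target `v_i` as the scaling factor `c → ∞`. -/
theorem network_output_tendsto {d k m : ℕ} (hk : 0 < k)
    (a : EuclideanSpace ℝ (Fin d)) (ha : ‖a‖ = 1)
    (δ : ℝ) (hδ : 0 < δ)
    (b : Fin (k + 1) → ℝ) (hb : StrictMono b)
    (v : Fin k → Fin m → ℝ)
    (W : Matrix (Fin k) (Fin m) ℝ)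
    (hW0 : W ⟨0, hk⟩ = v ⟨0, hk⟩)
    (hWs : ∀ i j : Fin k, (j : ℕ) = (i : ℕ) + 1 → W j = v j - v i)
    (x : EuclideanSpace ℝ (Fin d)) (i : Fin k)
    (hx₁ : b i.castSucc + δ < ⟪a, x⟫)
    (hx₂ : ⟪a, x⟫ < b i.succ - δ) :
    Filter.Tendsto
      (fun c : ℝ => fun j : Fin m =>
        ∑ l : Fin k, W l j * sigmoid (c * (⟪a, x⟫ - b l.castSucc)))
      Filter.atTop (nhds (v i)) :=
  network_output_tendsto_general hk a δ hδ b hb v W hW0 hWs x i hx₁ hx₂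
end

section
/- (Corollary 1) Let D be a probability distribution on ℝ^d × {1,…,c} that is k-separable with δ-margin, witnessed by a unit vector a ∈ ℝ^d, boundaries b_1 < ⋯ < b_{k+1}, and labels y_1, …, y_k ∈ {1,…,c}. Then there exist a scaling factor c_s > 0 and a weight matrix W ∈ ℝ^{k×c} such that the 2-layer sigmoid network g : ℝ^d → ℝ^c given by g_j(x) = Σ_{l=1}^{k} W_{l,j} · ρ(c_s(aᵀx - b_l)) perfectly classifies D: for D-almost every (x,y), the label y is the unique index maximizing the vector g(x), i.e., g_y(x) > g_j(x) for all j ≠ y. -/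
/-!
Give strip `l` the weight `2 ^ l` on its own label `y l`. For `x` in strip `i` and a large scale
`cs`, the margin `δ` puts the sigmoid unit of the boundary `b i` within `ε = exp (-cs δ)` of `1`
and the units of all higher boundaries within `ε` of `0`. Since `∑_{l < i} 2 ^ l < 2 ^ i`,
the weight `2 ^ i` then beats everything another label can collect as soon as `2 ^ (k + 1) ε < 1`.
Separability says that almost every sample lies in some strip and carries that strip's label.
-/

open RealInnerProductSpace MeasureTheory

open Filter Topology

lemma sigmoid_eq_real_sigmoid : sigmoid = Real.sigmoid := by
  ext t
  rw [sigmoid, Real.sigmoid_def, one_div]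

lemma Real.sigmoid_le_exp (t : ℝ) : Real.sigmoid t ≤ Real.exp t := by
  have h := Real.sigmoid_mul_rexp_neg (-t)
  rw [neg_neg] at h
  rw [← h]
  exact mul_le_of_le_one_left (Real.exp_pos t).le (Real.sigmoid_le_one (-t))

lemma Real.one_sub_exp_neg_le_sigmoid (t : ℝ) : 1 - Real.exp (-t) ≤ Real.sigmoid t := by
  linarith [Real.sigmoid_neg t, Real.sigmoid_le_exp (-t)]

lemma exists_pos_mul_exp_neg_mul_lt_one (M : ℝ) {δ : ℝ} (hδ : 0 < δ) :
    ∃ cs > 0, M * Real.exp (-(cs * δ)) < 1 := by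
  have hlim : Tendsto (fun cs => M * Real.exp (-(cs * δ))) atTop (𝓝 0) := by
    simpa using (Real.tendsto_exp_atBot.comp
      (tendsto_neg_atTop_atBot.comp (tendsto_id.atTop_mul_const hδ))).const_mul M
  exact ((eventually_gt_atTop 0).and (hlim.eventually (gt_mem_nhds one_pos))).exists

lemma Fin.sum_two_pow_le_two_pow_sub_one {k n : ℕ} {B : Finset (Fin k)}
    (hB : ∀ l ∈ B, (l : ℕ) < n) : ∑ l ∈ B, (2 : ℝ) ^ (l : ℕ) ≤ 2 ^ n - 1 := by
  have h := Nat.geomSum_lt le_rfl (s := B.map Fin.valEmbedding) (by simpa using hB)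
  rw [Finset.sum_map] at h
  have h' : ((∑ l ∈ B, 2 ^ (l : ℕ) : ℕ) : ℝ) + 1 ≤ ((2 ^ n : ℕ) : ℝ) := by exact_mod_cast h
  push_cast at h'
  linarith

lemma sum_two_pow_mul_lt_sum_two_pow_mul {k : ℕ} {s : Fin k → ℝ} {ε : ℝ} {i : Fin k}
    {A B : Finset (Fin k)} (hs0 : ∀ l, 0 ≤ s l) (hs1 : ∀ l, s l ≤ 1) (hsi : 1 - ε ≤ s i)
    (hs_gt : ∀ l, i < l → s l ≤ ε) (hε0 : 0 ≤ ε) (hε : 2 ^ (k + 1) * ε < 1)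
    (hiA : i ∈ A) (hiB : i ∉ B) :
    ∑ l ∈ B, 2 ^ (l : ℕ) * s l < ∑ l ∈ A, 2 ^ (l : ℕ) * s l := by
  have lower : 2 ^ (i : ℕ) * (1 - ε) ≤ ∑ l ∈ A, 2 ^ (l : ℕ) * s l :=
    (mul_le_mul_of_nonneg_left hsi (by positivity)).trans
      (Finset.single_le_sum (fun l _ => mul_nonneg (pow_nonneg zero_le_two _) (hs0 l)) hiA)
  have upper : ∑ l ∈ B, 2 ^ (l : ℕ) * s l ≤
      ∑ l ∈ B with l < i, (2 : ℝ) ^ (l : ℕ) + ε * ∑ l ∈ B with ¬l < i, (2 : ℝ) ^ (l : ℕ) := by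
    rw [← Finset.sum_filter_add_sum_filter_not B (· < i), Finset.mul_sum]
    refine add_le_add (Finset.sum_le_sum fun l _ => ?_) (Finset.sum_le_sum fun l hl => ?_)
    · exact mul_le_of_le_one_right (by positivity) (hs1 l)
    · rw [mul_comm ε]
      obtain ⟨hlB, hli⟩ := Finset.mem_filter.1 hl
      exact mul_le_mul_of_nonneg_left
        (hs_gt l (lt_of_le_of_ne (not_lt.1 hli) (fun h => hiB (h ▸ hlB)))) (by positivity)
  have low : ∑ l ∈ B with l < i, (2 : ℝ) ^ (l : ℕ) ≤ 2 ^ (i : ℕ) - 1 :=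
    Fin.sum_two_pow_le_two_pow_sub_one fun l hl => (Finset.mem_filter.1 hl).2
  have high : ∑ l ∈ B with ¬l < i, (2 : ℝ) ^ (l : ℕ) ≤ 2 ^ k - 1 :=
    Fin.sum_two_pow_le_two_pow_sub_one fun l _ => l.isLt
  have hik : (2 : ℝ) ^ (i : ℕ) ≤ 2 ^ k := pow_le_pow_right₀ one_le_two i.isLt.le
  rw [pow_succ] at hε
  nlinarith

def labelWeights {k c : ℕ} (y : Fin k → Fin c) : Matrix (Fin k) (Fin c) ℝ :=
  fun l j => if y l = j then 2 ^ (l : ℕ) else 0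

lemma sum_labelWeights_mul {k c : ℕ} (y : Fin k → Fin c) (s : Fin k → ℝ) (j : Fin c) :
    ∑ l, labelWeights y l j * s l = ∑ l with y l = j, 2 ^ (l : ℕ) * s l := by
  simp only [labelWeights, ite_mul, zero_mul, Finset.sum_ite, Finset.sum_const_zero, add_zero]

lemma sum_labelWeights_mul_sigmoid_lt {k c : ℕ} {δ cs x : ℝ} {b : Fin (k + 1) → ℝ}
    (hb : Monotone b) (y : Fin k → Fin c) (hcs : 0 < cs)
    (hε : 2 ^ (k + 1) * Real.exp (-(cs * δ)) < 1) {i : Fin k}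
    (hx : b i.castSucc + δ < x ∧ x < b i.succ - δ) {j : Fin c} (hj : j ≠ y i) :
    ∑ l, labelWeights y l j * Real.sigmoid (cs * (x - b l.castSucc))
      < ∑ l, labelWeights y l (y i) * Real.sigmoid (cs * (x - b l.castSucc)) := by
  rw [sum_labelWeights_mul, sum_labelWeights_mul]
  refine sum_two_pow_mul_lt_sum_two_pow_mul (fun _ => Real.sigmoid_nonneg _)
    (fun _ => Real.sigmoid_le_one _) ?_ ?_ (Real.exp_pos _).le hε
    (Finset.mem_filter.2 ⟨Finset.mem_univ _, rfl⟩) (fun h => hj (Finset.mem_filter.1 h).2.symm)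
  · calc 1 - Real.exp (-(cs * δ)) ≤ Real.sigmoid (cs * δ) := Real.one_sub_exp_neg_le_sigmoid _
      _ ≤ _ := Real.sigmoid_le (by nlinarith)
  · intro l hl
    have hbl : b i.succ ≤ b l.castSucc := hb (Fin.succ_le_castSucc_iff.2 hl)
    calc Real.sigmoid (cs * (x - b l.castSucc)) ≤ Real.sigmoid (-(cs * δ)) :=
          Real.sigmoid_le (by nlinarith)
      _ ≤ Real.exp (-(cs * δ)) := Real.sigmoid_le_exp _

lemma MeasureTheory.ae_exists_mem_inter {α ι : Type*} [MeasurableSpace α] [Countable ι]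
    {μ : Measure α} [IsProbabilityMeasure μ] {S L : ι → Set α}
    (hS : ∀ i, MeasurableSet (S i)) (hL : ∀ i, MeasurableSet (L i))
    (hSL : ∀ i, μ (S i ∩ L i) = μ (S i)) (hcover : μ (⋃ i, S i) = 1) :
    ∀ᵐ p ∂μ, ∃ i, p ∈ S i ∩ L i := by
  have hmem : ∀ᵐ p ∂μ, p ∈ ⋃ i, S i :=
    (ae_mem_iff_measure_eq (MeasurableSet.iUnion hS).nullMeasurableSet).2
      (by rw [hcover, measure_univ])
  have hlabel : ∀ i, S i ≤ᵐ[μ] (S i ∩ L i : Set α) := fun i =>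
    (ae_eq_of_subset_of_measure_ge Set.inter_subset_left (hSL i).ge
      ((hS i).inter (hL i)).nullMeasurableSet (measure_ne_top μ _)).symm.le
  filter_upwards [hmem, ae_all_iff.2 hlabel] with p hp hpL
  obtain ⟨i, hi⟩ := Set.mem_iUnion.1 hp
  exact ⟨i, hpL i hi⟩

theorem two_layer_network_perfect_classification_general {d c k : ℕ}
    (μ : Measure (EuclideanSpace ℝ (Fin d) × Fin c)) [IsProbabilityMeasure μ]
    (δ : ℝ) (hδ : 0 < δ)
    (a : EuclideanSpace ℝ (Fin d))
    (b : Fin (k + 1) → ℝ) (hb : StrictMono b)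
    (y : Fin k → Fin c)
    (hcond : ∀ i : Fin k,
      μ {p | (b i.castSucc + δ < ⟪a, p.1⟫ ∧ ⟪a, p.1⟫ < b i.succ - δ) ∧ p.2 = y i}
        = μ {p | b i.castSucc + δ < ⟪a, p.1⟫ ∧ ⟪a, p.1⟫ < b i.succ - δ})
    (hcover :
      μ {p | ∃ i : Fin k, b i.castSucc + δ < ⟪a, p.1⟫ ∧ ⟪a, p.1⟫ < b i.succ - δ} = 1) :
    ∃ (cs : ℝ) (W : Matrix (Fin k) (Fin c) ℝ), 0 < cs ∧
      μ {p | ¬ ∀ j : Fin c, j ≠ p.2 →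
        (∑ l : Fin k, W l j * sigmoid (cs * (⟪a, p.1⟫ - b l.castSucc)))
          < ∑ l : Fin k, W l p.2 * sigmoid (cs * (⟪a, p.1⟫ - b l.castSucc))} = 0 := by
  obtain ⟨cs, hcs, hε⟩ := exists_pos_mul_exp_neg_mul_lt_one (2 ^ (k + 1)) hδ
  refine ⟨cs, labelWeights y, hcs, ?_⟩
  have hproj : Measurable fun p : EuclideanSpace ℝ (Fin d) × Fin c => ⟪a, p.1⟫ :=
    measurable_const.inner measurable_fst
  have hclass := ae_exists_mem_inter (μ := μ)
    (S := fun i : Fin k => {p | b i.castSucc + δ < ⟪a, p.1⟫ ∧ ⟪a, p.1⟫ < b i.succ - δ})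
    (L := fun i : Fin k => {p | p.2 = y i})
    (fun i => (measurableSet_lt measurable_const hproj).inter
      (measurableSet_lt hproj measurable_const))
    (fun i => measurable_snd (measurableSet_singleton (y i))) hcond
    (by rwa [← Set.ofPred_exists])
  rw [sigmoid_eq_real_sigmoid, ← ae_iff]
  filter_upwards [hclass] with p ⟨i, hx, hy⟩ j hj
  rw [show p.2 = y i from hy] at hj ⊢
  exact sum_labelWeights_mul_sigmoid_lt hb.monotone y hcs hε hx hj

/-- **Corollary 1.** If the distribution `μ` on `ℝ^d × {1,…,c}` is `k`-separable with
`δ`-margin (witnessed by the unit vector `a`, boundaries `b_1 < ⋯ < b_{k+1}` and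
labels `y_1,…,y_k`), then there exist a scaling factor `c_s > 0` and a weight matrix
`W ∈ ℝ^{k×c}` such that the 2-layer sigmoid network perfectly classifies `μ`:
almost surely, the true label is the unique argmax of the network output. -/
theorem two_layer_network_perfect_classification {d c k : ℕ}
    (μ : Measure (EuclideanSpace ℝ (Fin d) × Fin c)) [IsProbabilityMeasure μ]
    (δ : ℝ) (hδ : 0 < δ)
    (a : EuclideanSpace ℝ (Fin d)) (ha : ‖a‖ = 1)
    (b : Fin (k + 1) → ℝ) (hb : StrictMono b)
    (y : Fin k → Fin c)
    (hcond : ∀ i : Fin k,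
      μ {p | (b i.castSucc + δ < ⟪a, p.1⟫ ∧ ⟪a, p.1⟫ < b i.succ - δ) ∧ p.2 = y i}
        = μ {p | b i.castSucc + δ < ⟪a, p.1⟫ ∧ ⟪a, p.1⟫ < b i.succ - δ})
    (hcover :
      μ {p | ∃ i : Fin k, b i.castSucc + δ < ⟪a, p.1⟫ ∧ ⟪a, p.1⟫ < b i.succ - δ} = 1) :
    ∃ (cs : ℝ) (W : Matrix (Fin k) (Fin c) ℝ), 0 < cs ∧
      μ {p | ¬ ∀ j : Fin c, j ≠ p.2 →
        (∑ l : Fin k, W l j * sigmoid (cs * (⟪a, p.1⟫ - b l.castSucc)))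
          < ∑ l : Fin k, W l p.2 * sigmoid (cs * (⟪a, p.1⟫ - b l.castSucc))} = 0 :=
  two_layer_network_perfect_classification_general μ δ hδ a b hb y hcond hcover
end
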